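/- arXiv:1911.08399 — 10 statements merged into one kernel-verified Lean document; each statement's English description precedes it below -/
import Mathlib

section
/- For every real α and every complex z with α*z ∉ {1, 2, 4}, the third-order scalar TASE function has the closed form T 3 α z = (1/3)*(1 - α*z)⁻¹ - 4*(2 - α*z)⁻¹ + (32/3)*(4 - α*z)⁻¹. -/
noncomputable def T : ℕ → ℝ → ℂ → ℂ
  | 0, _, _ => 1
  | 1, α, z => (1 - (α : ℂ) * z)⁻¹
  | p + 2, α, z =>
      (2 ^ (p + 1) * T (p + 1) (α / 2) z - T (p + 1) α z) / (2 ^ (p + 1) - 1)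

/-- Closed form of the third-order scalar TASE function. -/
theorem tase3_closed_form (α : ℝ) (z : ℂ) (h : (α : ℂ) * z ∉ ({1, 2, 4} : Set ℂ)) :
    T 3 α z = (1 / 3) * (1 - (α : ℂ) * z)⁻¹ - 4 * (2 - (α : ℂ) * z)⁻¹
      + (32 / 3) * (4 - (α : ℂ) * z)⁻¹ := by
  simp only [Set.mem_insert_iff, Set.mem_singleton_iff, not_or] at h
  obtain ⟨h1, h2, h4⟩ := h
  have e1 : (1 : ℂ) - (α : ℂ) * z ≠ 0 := by
    intro hc; apply h1; linear_combination -hc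
  have e2 : (2 : ℂ) - (α : ℂ) * z ≠ 0 := by
    intro hc; apply h2; linear_combination -hc
  have e4 : (4 : ℂ) - (α : ℂ) * z ≠ 0 := by
    intro hc; apply h4; linear_combination -hc
  have hhalf : (1 : ℂ) - ((α : ℝ) / 2 : ℝ) * z = (2 - (α : ℂ) * z) / 2 := by
    push_cast; ring
  have hquart : (1 : ℂ) - ((α : ℝ) / 2 / 2 : ℝ) * z = (4 - (α : ℂ) * z) / 4 := by
    push_cast; ring
  show (2 ^ (0 + 1 + 1) * T (0 + 1 + 1) (α / 2) z - T (0 + 1 + 1) α z) / (2 ^ (0 + 1 + 1) - 1) = _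
  show ((2:ℂ) ^ 2 * ((2 ^ 1 * T 1 (α / 2 / 2) z - T 1 (α / 2) z) / (2 ^ 1 - 1))
      - (2 ^ 1 * T 1 (α / 2) z - T 1 α z) / (2 ^ 1 - 1)) / (2 ^ 2 - 1) = _
  show ((2:ℂ) ^ 2 * ((2 ^ 1 * (1 - ((α:ℝ) / 2 / 2 : ℝ) * z)⁻¹ - (1 - ((α:ℝ) / 2 : ℝ) * z)⁻¹) / (2 ^ 1 - 1))
      - (2 ^ 1 * (1 - ((α:ℝ) / 2 : ℝ) * z)⁻¹ - (1 - (α:ℂ) * z)⁻¹) / (2 ^ 1 - 1)) / (2 ^ 2 - 1) = _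
  rw [hhalf, hquart, inv_div, inv_div]
  simp only [div_eq_mul_inv]
  ring
end

section
/- For every real α and every complex z with α*z ∉ {1, 2, 4, 8}, the fourth-order scalar TASE function has the closed form T 4 α z = -(1/21)*(1 - α*z)⁻¹ + (4/3)*(2 - α*z)⁻¹ - (32/3)*(4 - α*z)⁻¹ + (512/21)*(8 - α*z)⁻¹. -/
/-- Closed form of the fourth-order scalar TASE function. -/
theorem tase4_closed_form (α : ℝ) (z : ℂ) (h : (α : ℂ) * z ∉ ({1, 2, 4, 8} : Set ℂ)) :
    T 4 α z = -(1 / 21) * (1 - (α : ℂ) * z)⁻¹ + (4 / 3) * (2 - (α : ℂ) * z)⁻¹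
      - (32 / 3) * (4 - (α : ℂ) * z)⁻¹ + (512 / 21) * (8 - (α : ℂ) * z)⁻¹ := by
  have r2 : (1 - ((α / 2 : ℝ) : ℂ) * z)⁻¹ = 2 * (2 - (α : ℂ) * z)⁻¹ := by
    push_cast
    rw [show (1 - (α : ℂ) / 2 * z) = (2 - (α : ℂ) * z) / 2 by ring, inv_div]
    ring
  have r4 : (1 - ((α / 2 / 2 : ℝ) : ℂ) * z)⁻¹ = 4 * (4 - (α : ℂ) * z)⁻¹ := by
    push_cast
    rw [show (1 - (α : ℂ) / 2 / 2 * z) = (4 - (α : ℂ) * z) / 4 by ring, inv_div]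
    ring
  have r8 : (1 - ((α / 2 / 2 / 2 : ℝ) : ℂ) * z)⁻¹ = 8 * (8 - (α : ℂ) * z)⁻¹ := by
    push_cast
    rw [show (1 - (α : ℂ) / 2 / 2 / 2 * z) = (8 - (α : ℂ) * z) / 8 by ring, inv_div]
    ring
  simp only [T, r2, r4, r8]
  ring
end

section
/- For every integer p ≥ 1 and every real α, the scalar TASE function is p-th order accurate: the function z ↦ T p α z - 1 is big-O of z^p as z → 0 in ℂ (i.e., IsBigO (nhds 0) (fun z => T p α z - 1) (fun z => z^p)). -/
open Asymptotics

/-!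
`T p α z` depends only on `α z`, so it suffices to treat `α = 1`. If
`T (n+1) 1 w - 1 = w^(n+1) F(w)` with `F` analytic at `0`, then the extrapolation step gives
`T (n+2) 1 w - 1 = w^(n+1) (F(w/2) - F(w)) / (2^(n+1) - 1)`: the weight `2^(n+1)` cancels the
scaling of `(w/2)^(n+1)`, and the new factor vanishes at `0`, so one more power of `w` splits off.
-/

open Filter Topology

theorem AnalyticAt.dslope {𝕜 E : Type*} [NontriviallyNormedField 𝕜] [NormedAddCommGroup E]
    [NormedSpace 𝕜 E] {f : 𝕜 → E} {z₀ : 𝕜} (hf : AnalyticAt 𝕜 f z₀) :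
    AnalyticAt 𝕜 (dslope f z₀) z₀ :=
  let ⟨_, hp⟩ := hf
  hp.has_fpower_series_dslope_fslope.analyticAt

theorem T_eq_T_one_mul : ∀ (p : ℕ) (α : ℝ) (z : ℂ), T p α z = T p 1 (α * z)
  | 0, _, _ => rfl
  | 1, α, z => by simp [T]
  | p + 2, α, z => by
    rw [T, T, T_eq_T_one_mul (p + 1) (α / 2), T_eq_T_one_mul (p + 1) α,
      T_eq_T_one_mul (p + 1) (1 / 2)]
    push_cast
    ring_nf

theorem T_one_add_two (n : ℕ) (w : ℂ) :
    T (n + 2) 1 w = (2 ^ (n + 1) * T (n + 1) 1 (w / 2) - T (n + 1) 1 w) / (2 ^ (n + 1) - 1) := by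
  rw [T, T_eq_T_one_mul (n + 1) (1 / 2)]
  push_cast
  ring_nf

theorem exists_analyticAt_T_one_sub_one_eq_pow_mul (n : ℕ) :
    ∃ F : ℂ → ℂ, AnalyticAt ℂ F 0 ∧ ∀ᶠ w in 𝓝 0, T (n + 1) 1 w - 1 = w ^ (n + 1) * F w := by
  induction n with
  | zero =>
    refine ⟨fun w => (1 - w)⁻¹, (analyticAt_const.sub analyticAt_id).inv (by simp), ?_⟩
    have hne : ∀ᶠ w in 𝓝 (0 : ℂ), 1 - w ≠ 0 :=
      (continuous_const.sub continuous_id).continuousAt.eventually_ne (by simp)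
    filter_upwards [hne] with w hw
    simp only [T, Complex.ofReal_one, one_mul]
    field_simp
    ring
  | succ n ih =>
    obtain ⟨F, hF, hFw⟩ := ih
    have hc : (2 : ℂ) ^ (n + 1) - 1 ≠ 0 := by
      rw [sub_ne_zero]
      exact_mod_cast (Nat.one_lt_two_pow (Nat.succ_ne_zero n)).ne'
    set H : ℂ → ℂ := fun w => (F (w / 2) - F w) / (2 ^ (n + 1) - 1)
    have hH : AnalyticAt ℂ H 0 := by
      have hF_half : AnalyticAt ℂ (fun w : ℂ => F (w / 2)) 0 :=
        hF.comp_of_eq (analyticAt_id.div_const) (zero_div 2)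
      exact (hF_half.sub hF).div_const
    have hH_eq : ∀ w, w * dslope H 0 w = H w := fun w => by
      simpa [H] using sub_smul_dslope H 0 w
    have hhalf : Tendsto (fun w : ℂ => w / 2) (𝓝 0) (𝓝 0) := by
      simpa using (continuous_id.div_const (2 : ℂ)).tendsto 0
    refine ⟨dslope H 0, hH.dslope, ?_⟩
    filter_upwards [hFw, hhalf.eventually hFw] with w hw hw_half
    rw [pow_succ, mul_assoc, hH_eq, T_one_add_two,
      eq_add_of_sub_eq hw, eq_add_of_sub_eq hw_half, div_pow]
    simp only [H]
    field_simp
    ring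

theorem isBigO_T_one_sub_one (p : ℕ) :
    (fun w : ℂ => T p 1 w - 1) =O[𝓝 0] fun w : ℂ => w ^ p := by
  cases p with
  | zero => simpa only [T, sub_self] using isBigO_zero _ _
  | succ n =>
    obtain ⟨F, hF, hFw⟩ := exists_analyticAt_T_one_sub_one_eq_pow_mul n
    have hF_bdd : F =O[𝓝 0] fun _ => (1 : ℂ) := hF.continuousAt.tendsto.isBigO_one ℂ
    simpa using EventuallyEq.trans_isBigO hFw ((isBigO_refl _ _).mul hF_bdd)

theorem tase_order_accuracy_general (p : ℕ) (α : ℝ) :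
    (fun z : ℂ => T p α z - 1) =O[nhds 0] fun z : ℂ => z ^ p := by
  have hscale : Tendsto (fun z : ℂ => (α : ℂ) * z) (𝓝 0) (𝓝 0) := by
    simpa using (continuous_const_mul (α : ℂ)).tendsto 0
  simp_rw [T_eq_T_one_mul p α]
  calc (fun z : ℂ => T p 1 (α * z) - 1) =O[𝓝 0] fun z : ℂ => ((α : ℂ) * z) ^ p :=
        (isBigO_T_one_sub_one p).comp_tendsto hscale
    _ =O[𝓝 0] fun z : ℂ => z ^ p := by
        simpa only [mul_pow] using (isBigO_refl (fun z : ℂ => z ^ p) _).const_mul_left _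

/-- The scalar TASE function of order `p` is `p`-th order accurate:
`T p α z - 1 = O(z^p)` as `z → 0`. -/
theorem tase_order_accuracy (p : ℕ) (hp : 1 ≤ p) (α : ℝ) :
    (fun z : ℂ => T p α z - 1) =O[nhds 0] fun z : ℂ => z ^ p :=
  tase_order_accuracy_general p α
end

section
/- (Asymptotic stability of TASE, Theorem 1.) Fix an integer p ≥ 1, a real α > 0, and a complex number λ ≠ 0 with Re λ ≤ 0. Then the modified dimensionless eigenvalue tends to a negative real constant: the function t ↦ (t*λ) * T p α (t*λ) (for real t) tends to -(2^p - 1)/α as t → +∞. Moreover, if C > 0 and α ≥ (2^p - 1)/C, then this limit satisfies -C ≤ -(2^p - 1)/α < 0, so the limit lies on the negative real axis within distance C of the origin. -/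
/-!
For `z ≠ 0`, `z * T 1 α z = (z⁻¹ - α)⁻¹`, which tends to `-1/α` as `|z| → ∞`. Since `z * T p α z`
obeys the same linear recursion in `p` as `T`, so do its limits `L p α`, and
`L p α = -(2^p - 1) / α` solves `L (p + 1) α = (2^p L p (α/2) - L p α) / (2^p - 1)`.
Along any ray `t ↦ t μ` with `μ ≠ 0` the argument `tμ` leaves every bounded set.
-/

open Filter

open Bornology Topology

lemma mul_T_one_eq_inv_inv_sub (α : ℝ) {z : ℂ} (hz : z ≠ 0) : z * T 1 α z = (z⁻¹ - α)⁻¹ := by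
  have h : z⁻¹ - α = (1 - α * z) / z := by field_simp
  rw [T, h, inv_div, div_eq_mul_inv]

lemma tendsto_mul_T_one {α : ℝ} (hα : α ≠ 0) :
    Tendsto (fun z => z * T 1 α z) (cobounded ℂ) (𝓝 (-(α : ℂ)⁻¹)) := by
  have h : Tendsto (fun z : ℂ => (z⁻¹ - α)⁻¹) (cobounded ℂ) (𝓝 (0 - α)⁻¹) :=
    (tendsto_inv₀_cobounded.sub_const _).inv₀ (by simpa using hα)
  rw [zero_sub, inv_neg] at h
  refine h.congr' ?_
  filter_upwards [eventually_ne_cobounded 0] with z hz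
  exact (mul_T_one_eq_inv_inv_sub α hz).symm

lemma mul_T_add_two (p : ℕ) (α : ℝ) (z : ℂ) :
    z * T (p + 2) α z =
      (2 ^ (p + 1) * (z * T (p + 1) (α / 2) z) - z * T (p + 1) α z) / (2 ^ (p + 1) - 1) := by
  rw [T]
  ring

lemma tendsto_mul_T (p : ℕ) {α : ℝ} (hα : α ≠ 0) :
    Tendsto (fun z => z * T (p + 1) α z) (cobounded ℂ) (𝓝 (-(2 ^ (p + 1) - 1) / α)) := by
  induction p generalizing α with
  | zero =>
    convert tendsto_mul_T_one hα using 2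
    ring
  | succ p ih =>
    have hpow : (2 : ℂ) ^ (p + 1) - 1 ≠ 0 := by
      rw [sub_ne_zero]
      exact_mod_cast (Nat.one_lt_two_pow p.succ_ne_zero).ne'
    have h := ((ih (div_ne_zero hα two_ne_zero)).const_mul (2 ^ (p + 1))).sub (ih hα)
      |>.div_const ((2 : ℂ) ^ (p + 1) - 1)
    simp only [← mul_T_add_two] at h
    convert h using 2
    have hα' : (α : ℂ) ≠ 0 := by exact_mod_cast hα
    push_cast
    field_simp
    ring

theorem tase_asymptotic_stability_general (p : ℕ) (hp : 1 ≤ p) (α : ℝ) (hα : 0 < α)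
    (μ : ℂ) (hμ : μ ≠ 0) :
    Tendsto (fun t : ℝ => ((t : ℂ) * μ) * T p α ((t : ℂ) * μ)) atTop
        (nhds (((-(2 ^ p - 1) / α : ℝ) : ℂ))) ∧
      ∀ C : ℝ, 0 < C → (2 ^ p - 1) / C ≤ α →
        -C ≤ -(2 ^ p - 1) / α ∧ -(2 ^ p - 1) / α < 0 := by
  obtain ⟨q, rfl⟩ := Nat.exists_eq_add_of_le' hp
  have hray : Tendsto (fun t : ℝ => (t : ℂ) * μ) atTop (cobounded ℂ) :=
    (tendsto_mul_right_cobounded hμ).comp (RCLike.tendsto_ofReal_atTop_cobounded ℂ)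
  have hpow : (1 : ℝ) < 2 ^ (q + 1) := one_lt_pow₀ one_lt_two q.succ_ne_zero
  refine ⟨?_, fun C hC hCα => ⟨?_, ?_⟩⟩
  · have hlim : ((-(2 ^ (q + 1) - 1) / α : ℝ) : ℂ) = -(2 ^ (q + 1) - 1) / α := by push_cast; rfl
    rw [hlim]
    exact (tendsto_mul_T q hα.ne').comp hray
  · rw [neg_div, neg_le_neg_iff, div_le_iff₀ hα]
    rw [div_le_iff₀ hC] at hCα
    linarith
  · exact div_neg_of_neg_of_pos (by linarith) hα

/-- Asymptotic stability of TASE: as the time step tends to `+∞`, the modified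
dimensionless eigenvalue `(tλ) T p α (tλ)` tends to the negative real constant
`-(2^p - 1)/α`, and if `α ≥ (2^p - 1)/C` with `C > 0` then this limit lies in `[-C, 0)`. -/
theorem tase_asymptotic_stability (p : ℕ) (hp : 1 ≤ p) (α : ℝ) (hα : 0 < α)
    (μ : ℂ) (hμ : μ ≠ 0) (hre : μ.re ≤ 0) :
    Tendsto (fun t : ℝ => ((t : ℂ) * μ) * T p α ((t : ℂ) * μ)) atTop
        (nhds (((-(2 ^ p - 1) / α : ℝ) : ℂ))) ∧
      ∀ C : ℝ, 0 < C → (2 ^ p - 1) / C ≤ α →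
        -C ≤ -(2 ^ p - 1) / α ∧ -(2 ^ p - 1) / α < 0 :=
  tase_asymptotic_stability_general p hp α hα μ hμ
end

section
/- (Lemma: from explicit Euler to arbitrary-order Runge-Kutta.) Let s ≥ 1 and let a, b : ℕ → ℕ → ℝ be nonnegative Shu-Osher coefficients with Σ_{k=0}^{i-1} a i k = 1 for every 1 ≤ i ≤ s, and such that b i k = 0 whenever a i k = 0. Let w ∈ ℂ be any complex number and suppose each scaled explicit-Euler substep is contractive: for all 1 ≤ i ≤ s and k < i with a i k > 0, |1 + (b i k / a i k) * w| ≤ 1. Then the Runge-Kutta iterates defined by y 0 = y₀ and y i = Σ_{k=0}^{i-1} (a i k * y k + b i k * w * y k) for 1 ≤ i ≤ s satisfy |y s| ≤ |y₀|. -/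
/-!
Writing `a + b w = a (1 + (b / a) w)` shows that each coefficient `a i k + b i k w` has modulus
at most `a i k`, so every stage is a combination of earlier stages whose coefficients have total
modulus at most `∑ k, a i k = 1`; by strong induction no stage grows in norm.
-/

open Finset

theorem Complex.norm_ofReal_add_ofReal_mul_le {a b : ℝ} {w : ℂ} (ha : 0 ≤ a)
    (hb : a = 0 → b = 0) (h : 0 < a → ‖1 + ((b / a : ℝ) : ℂ) * w‖ ≤ 1) :
    ‖(a : ℂ) + b * w‖ ≤ a := by
  rcases ha.eq_or_lt with rfl | ha
  · simp [hb rfl]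
  have hfactor : (a : ℂ) + b * w = a * (1 + ((b / a : ℝ) : ℂ) * w) := by
    have : (a : ℂ) ≠ 0 := by exact_mod_cast ha.ne'
    push_cast
    field_simp
  calc ‖(a : ℂ) + b * w‖ = a * ‖1 + ((b / a : ℝ) : ℂ) * w‖ := by
        rw [hfactor, norm_mul, Complex.norm_of_nonneg ha.le]
    _ ≤ a * 1 := mul_le_mul_of_nonneg_left (h ha) ha.le
    _ = a := mul_one a

theorem norm_le_norm_zero_of_eq_sum_smul {𝕜 E : Type*} [NormedField 𝕜]
    [SeminormedAddCommGroup E] [NormedSpace 𝕜 E] {s : ℕ} {c : ℕ → ℕ → 𝕜} {y : ℕ → E}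
    (hc : ∀ i, 1 ≤ i → i ≤ s → ∑ k ∈ range i, ‖c i k‖ ≤ 1)
    (hy : ∀ i, 1 ≤ i → i ≤ s → y i = ∑ k ∈ range i, c i k • y k) :
    ∀ i ≤ s, ‖y i‖ ≤ ‖y 0‖ := by
  intro i
  induction i using Nat.strong_induction_on with
  | _ i ih =>
    intro his
    rcases Nat.eq_zero_or_pos i with rfl | hi
    · exact le_rfl
    calc ‖y i‖ = ‖∑ k ∈ range i, c i k • y k‖ := by rw [hy i hi his]
      _ ≤ ∑ k ∈ range i, ‖c i k‖ * ‖y k‖ := by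
        simpa only [norm_smul] using norm_sum_le (range i) fun k => c i k • y k
      _ ≤ ∑ k ∈ range i, ‖c i k‖ * ‖y 0‖ := by
        gcongr with k hk
        have hk := mem_range.1 hk
        exact ih k hk (hk.le.trans his)
      _ = (∑ k ∈ range i, ‖c i k‖) * ‖y 0‖ := (sum_mul ..).symm
      _ ≤ 1 * ‖y 0‖ := by gcongr; exact hc i hi his
      _ = ‖y 0‖ := one_mul _

theorem rk_contractive_of_euler_contractive_general
    (s : ℕ) (a b : ℕ → ℕ → ℝ)
    (ha : ∀ i k, 0 ≤ a i k)
    (hsum : ∀ i, 1 ≤ i → i ≤ s → ∑ k ∈ Finset.range i, a i k = 1)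
    (hb0 : ∀ i k, a i k = 0 → b i k = 0)
    (w : ℂ)
    (heuler : ∀ i k, 1 ≤ i → i ≤ s → k < i → 0 < a i k →
      ‖1 + ((b i k / a i k : ℝ) : ℂ) * w‖ ≤ 1)
    (y₀ : ℂ) (y : ℕ → ℂ) (hy0 : y 0 = y₀)
    (hy : ∀ i, 1 ≤ i → i ≤ s →
      y i = ∑ k ∈ Finset.range i, (((a i k : ℝ) : ℂ) * y k + ((b i k : ℝ) : ℂ) * w * y k)) :
    ‖y s‖ ≤ ‖y₀‖ := by
  have hcoeff : ∀ i, 1 ≤ i → i ≤ s →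
      ∑ k ∈ range i, ‖((a i k : ℝ) : ℂ) + ((b i k : ℝ) : ℂ) * w‖ ≤ 1 := fun i hi his =>
    hsum i hi his ▸ sum_le_sum fun k hk =>
      Complex.norm_ofReal_add_ofReal_mul_le (ha i k) (hb0 i k)
        (heuler i k hi his (mem_range.1 hk))
  have hstage : ∀ i, 1 ≤ i → i ≤ s →
      y i = ∑ k ∈ range i, (((a i k : ℝ) : ℂ) + ((b i k : ℝ) : ℂ) * w) • y k := by
    intro i hi his
    simp only [hy i hi his, smul_eq_mul, add_mul]
  exact hy0 ▸ norm_le_norm_zero_of_eq_sum_smul hcoeff hstage s le_rfl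

/-- From explicit Euler to arbitrary-order Runge–Kutta: if every scaled explicit-Euler
substep is contractive, then the Shu–Osher Runge–Kutta update is contractive. -/
theorem rk_contractive_of_euler_contractive
    (s : ℕ) (hs : 1 ≤ s) (a b : ℕ → ℕ → ℝ)
    (ha : ∀ i k, 0 ≤ a i k) (hb : ∀ i k, 0 ≤ b i k)
    (hsum : ∀ i, 1 ≤ i → i ≤ s → ∑ k ∈ Finset.range i, a i k = 1)
    (hb0 : ∀ i k, a i k = 0 → b i k = 0)
    (w : ℂ)
    (heuler : ∀ i k, 1 ≤ i → i ≤ s → k < i → 0 < a i k →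
      ‖1 + ((b i k / a i k : ℝ) : ℂ) * w‖ ≤ 1)
    (y₀ : ℂ) (y : ℕ → ℂ) (hy0 : y 0 = y₀)
    (hy : ∀ i, 1 ≤ i → i ≤ s →
      y i = ∑ k ∈ Finset.range i, (((a i k : ℝ) : ℂ) * y k + ((b i k : ℝ) : ℂ) * w * y k)) :
    ‖y s‖ ≤ ‖y₀‖ :=
  rk_contractive_of_euler_contractive_general s a b ha hsum hb0 w heuler y₀ y hy0 hy
end

section
/- (Theorem: unconditional stability of first-order TASE with Runge-Kutta.) Let s ≥ 1 and let a, b : ℕ → ℕ → ℝ be nonnegative Shu-Osher coefficients with Σ_{k=0}^{i-1} a i k = 1 for every 1 ≤ i ≤ s. Let α > 0 be a real number such that b i k ≤ 2 α a i k for all 1 ≤ i ≤ s and k < i (equivalently α ≥ 0.5 · max_{i,k}(b i k / a i k)). Then for every complex λ with Re λ ≤ 0 and every real Δt > 0, setting w = Δtλ/(1 - αΔtλ) (note 1 - αΔtλ ≠ 0 since Re(1 - αΔtλ) ≥ 1), the Runge-Kutta iterates y 0 = y₀, y i = Σ_{k=0}^{i-1} (a i k + b i k * w) * y k satisfy |y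 s| ≤ |y₀|; i.e., the explicit RK time integration of dy/dt = T¹_λ(α,Δt) λ y is unconditionally stable. -/
/-!
The TASE map `z ↦ w = z / (1 - α z)` sends the closed left half-plane into the closed disc of
radius `1 / (2α)` centred at `-1 / (2α)`. Writing each stage coefficient as
`a + b w = (a - b / (2α)) + b (w + 1 / (2α))`, the condition `b ≤ 2 α a` makes the first summand
nonnegative, so `‖a + b w‖ ≤ a`. Each stage is then bounded by a convex combination of earlier
stages, and induction on the stage gives `‖y s‖ ≤ ‖y 0‖`.
-/

open Finset

theorem Complex.one_le_re_one_sub_mul {α : ℝ} (hα : 0 ≤ α) {z : ℂ} (hz : z.re ≤ 0) :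
    1 ≤ (1 - (α : ℂ) * z).re := by
  simp only [Complex.sub_re, Complex.one_re, Complex.re_ofReal_mul]
  nlinarith

theorem Complex.one_sub_mul_ne_zero {α : ℝ} (hα : 0 ≤ α) {z : ℂ} (hz : z.re ≤ 0) :
    1 - (α : ℂ) * z ≠ 0 := fun h => by
  have h1 := Complex.one_le_re_one_sub_mul hα hz
  rw [h, Complex.zero_re] at h1
  linarith

theorem Complex.norm_one_add_le_norm_one_sub {ζ : ℂ} (hζ : ζ.re ≤ 0) :
    ‖1 + ζ‖ ≤ ‖1 - ζ‖ := by
  rw [Complex.norm_def, Complex.norm_def]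
  apply Real.sqrt_le_sqrt
  simp only [Complex.normSq_apply, Complex.add_re, Complex.add_im, Complex.sub_re,
    Complex.sub_im, Complex.one_re, Complex.one_im]
  nlinarith

theorem Complex.norm_div_one_sub_mul_add_inv_le {α : ℝ} (hα : 0 < α) {z : ℂ} (hz : z.re ≤ 0) :
    ‖z / (1 - α * z) + (2 * α : ℂ)⁻¹‖ ≤ (2 * α)⁻¹ := by
  have hd := Complex.one_sub_mul_ne_zero hα.le hz
  have hw : z / (1 - α * z) + (2 * α : ℂ)⁻¹ = (2 * α : ℂ)⁻¹ * ((1 + α * z) / (1 - α * z)) := by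
    have hα' : (α : ℂ) ≠ 0 := Complex.ofReal_ne_zero.mpr hα.ne'
    have hd' : 1 - z * α ≠ 0 := by rwa [mul_comm]
    field_simp
    ring
  have hre : ((α : ℂ) * z).re ≤ 0 := by
    rw [Complex.re_ofReal_mul]
    exact mul_nonpos_of_nonneg_of_nonpos hα.le hz
  have hnorm : ‖(2 * α : ℂ)⁻¹‖ = (2 * α)⁻¹ := by
    rw [norm_inv, ← Complex.ofReal_ofNat, ← Complex.ofReal_mul,
      Complex.norm_of_nonneg (by positivity)]
  rw [hw, norm_mul, hnorm]
  refine mul_le_of_le_one_right (by positivity) ?_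
  rw [norm_div, div_le_one (norm_pos_iff.mpr hd)]
  exact Complex.norm_one_add_le_norm_one_sub hre

theorem Complex.norm_add_mul_le_of_norm_add_inv_le {α a b : ℝ} (hα : 0 < α) (hb : 0 ≤ b)
    (hba : b ≤ 2 * α * a) {w : ℂ} (hw : ‖w + (2 * α : ℂ)⁻¹‖ ≤ (2 * α)⁻¹) :
    ‖(a : ℂ) + b * w‖ ≤ a := by
  have hc : 0 ≤ a - b * (2 * α)⁻¹ := by
    rw [sub_nonneg, ← div_eq_mul_inv, div_le_iff₀ (by positivity)]
    linarith
  have hsplit : (a : ℂ) + b * w = ((a - b * (2 * α)⁻¹ : ℝ) : ℂ) + b * (w + (2 * α : ℂ)⁻¹) := by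
    push_cast
    ring
  calc ‖(a : ℂ) + b * w‖
      ≤ (a - b * (2 * α)⁻¹) + b * ‖w + (2 * α : ℂ)⁻¹‖ := by
        rw [hsplit]
        refine (norm_add_le _ _).trans ?_
        rw [norm_mul, Complex.norm_of_nonneg hc, Complex.norm_of_nonneg hb]
    _ ≤ (a - b * (2 * α)⁻¹) + b * (2 * α)⁻¹ := by gcongr
    _ = a := by ring

theorem norm_le_norm_zero_of_forall_eq_sum {R : Type*} [SeminormedRing R] (s : ℕ)
    (a : ℕ → ℕ → ℝ) (c : ℕ → ℕ → R) (y : ℕ → R)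
    (hsum : ∀ i, 1 ≤ i → i ≤ s → ∑ k ∈ range i, a i k = 1)
    (hc : ∀ i k, 1 ≤ i → i ≤ s → k < i → ‖c i k‖ ≤ a i k)
    (hy : ∀ i, 1 ≤ i → i ≤ s → y i = ∑ k ∈ range i, c i k * y k) :
    ∀ i ≤ s, ‖y i‖ ≤ ‖y 0‖ := by
  intro i
  induction i using Nat.strong_induction_on with
  | _ i ih =>
    intro his
    rcases Nat.eq_zero_or_pos i with rfl | hi
    · exact le_rfl
    calc ‖y i‖
        ≤ ∑ k ∈ range i, ‖c i k * y k‖ := by rw [hy i hi his]; exact norm_sum_le _ _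
      _ ≤ ∑ k ∈ range i, a i k * ‖y 0‖ := by
        refine sum_le_sum fun k hk => ?_
        have hki := mem_range.mp hk
        have hcik := hc i k hi his hki
        exact (norm_mul_le _ _).trans <| mul_le_mul hcik (ih k hki (hki.le.trans his))
          (norm_nonneg _) ((norm_nonneg _).trans hcik)
      _ = ‖y 0‖ := by rw [← sum_mul, hsum i hi his, one_mul]

theorem tase1_rk_unconditionally_stable_general
    (s : ℕ) (a b : ℕ → ℕ → ℝ)
    (hb : ∀ i k, 0 ≤ b i k)
    (hsum : ∀ i, 1 ≤ i → i ≤ s → ∑ k ∈ Finset.range i, a i k = 1)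
    (α : ℝ) (hα : 0 < α)
    (hαb : ∀ i k, 1 ≤ i → i ≤ s → k < i → b i k ≤ 2 * α * a i k)
    (μ : ℂ) (hμ : μ.re ≤ 0) (Δt : ℝ) (hΔt : 0 < Δt)
    (w : ℂ) (hw : w = (Δt : ℂ) * μ / (1 - (α : ℂ) * (Δt : ℂ) * μ))
    (y₀ : ℂ) (y : ℕ → ℂ) (hy0 : y 0 = y₀)
    (hy : ∀ i, 1 ≤ i → i ≤ s →
      y i = ∑ k ∈ Finset.range i, (((a i k : ℝ) : ℂ) + ((b i k : ℝ) : ℂ) * w) * y k) :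
    (1 - (α : ℂ) * (Δt : ℂ) * μ ≠ 0) ∧ ‖y s‖ ≤ ‖y₀‖ := by
  have hz : ((Δt : ℂ) * μ).re ≤ 0 := by
    rw [Complex.re_ofReal_mul]
    exact mul_nonpos_of_nonneg_of_nonpos hΔt.le hμ
  rw [mul_assoc] at hw ⊢
  refine ⟨Complex.one_sub_mul_ne_zero hα.le hz, ?_⟩
  have hwdisc := hw ▸ Complex.norm_div_one_sub_mul_add_inv_le hα hz
  have hcoeff : ∀ i k, 1 ≤ i → i ≤ s → k < i → ‖(a i k : ℂ) + b i k * w‖ ≤ a i k :=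
    fun i k hi his hki =>
      Complex.norm_add_mul_le_of_norm_add_inv_le hα (hb i k) (hαb i k hi his hki) hwdisc
  exact hy0 ▸ norm_le_norm_zero_of_forall_eq_sum s a _ y hsum hcoeff hy s le_rfl

/-- Unconditional stability of first-order TASE with explicit Runge–Kutta methods in
Shu–Osher form: if `α > 0` satisfies `b i k ≤ 2 α (a i k)` (i.e.
`α ≥ 0.5 max (b i k / a i k)`), then for every `Re λ ≤ 0` and `Δt > 0` the RK iterates
for `dy/dt = T¹_λ(α,Δt) λ y` are contractive. -/
theorem tase1_rk_unconditionally_stable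
    (s : ℕ) (hs : 1 ≤ s) (a b : ℕ → ℕ → ℝ)
    (ha : ∀ i k, 0 ≤ a i k) (hb : ∀ i k, 0 ≤ b i k)
    (hsum : ∀ i, 1 ≤ i → i ≤ s → ∑ k ∈ Finset.range i, a i k = 1)
    (α : ℝ) (hα : 0 < α)
    (hαb : ∀ i k, 1 ≤ i → i ≤ s → k < i → b i k ≤ 2 * α * a i k)
    (μ : ℂ) (hμ : μ.re ≤ 0) (Δt : ℝ) (hΔt : 0 < Δt)
    (w : ℂ) (hw : w = (Δt : ℂ) * μ / (1 - (α : ℂ) * (Δt : ℂ) * μ))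
    (y₀ : ℂ) (y : ℕ → ℂ) (hy0 : y 0 = y₀)
    (hy : ∀ i, 1 ≤ i → i ≤ s →
      y i = ∑ k ∈ Finset.range i, (((a i k : ℝ) : ℂ) + ((b i k : ℝ) : ℂ) * w) * y k) :
    (1 - (α : ℂ) * (Δt : ℂ) * μ ≠ 0) ∧ ‖y s‖ ≤ ‖y₀‖ :=
  tase1_rk_unconditionally_stable_general s a b hb hsum α hα hαb μ hμ Δt hΔt w hw y₀ y hy0 hy
end

section
/- (Stability of linear SSP Runge-Kutta methods with first-order TASE.) For every real α ≥ 1/2, every integer s with 1 ≤ s ≤ 4, and every complex z with Re z ≤ 0, setting w = z/(1 - αz), the RK stability polynomial satisfies |Σ_{k=0}^{s} w^k / k!| ≤ 1. -/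
/-!
With `u = 1 + w`, the Möbius map `z ↦ u` sends the closed left half-plane into the closed unit
disk as soon as `α ≥ 1/2`, because `|1 + (1 - α) z|² - |1 - α z|² = 2 Re z + (1 - 2α) |z|²`.
Re-expanding the truncated exponential `Σ_{k ≤ s} w^k / k!` in powers of `u` (the Shu–Osher form
of the method, built from forward-Euler steps) gives the coefficients
`c_j = (1 / j!) Σ_{m ≤ s - j} (-1)^m / m!`. They are nonnegative, being partial sums of the
alternating series of `e⁻¹`, and they sum to `1` (put `w = 0`), so the stability function is a
convex combination of powers of a point of the unit disk.
-/

open Finset Nat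

/-- The coefficient of `(1 + w) ^ j` in `Σ_{k ≤ s} w ^ k / k!`; only `j ≤ s` is meaningful. -/
def shuOsherCoeff (K : Type*) [DivisionRing K] (s j : ℕ) : K :=
  (∑ m ∈ range (s + 1 - j), (-1 : K) ^ m / m !) / j !

theorem sum_pow_div_factorial_eq_sum_shuOsherCoeff_mul {K : Type*} [Field K] [CharZero K]
    (s : ℕ) (w : K) :
    ∑ k ∈ range (s + 1), w ^ k / k ! =
      ∑ j ∈ range (s + 1), shuOsherCoeff K s j * (1 + w) ^ j := by
  have binomial (k : ℕ) : w ^ k / k ! =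
      ∑ j ∈ range (k + 1), (1 + w) ^ j / j ! * ((-1) ^ (k - j) / (k - j)!) := by
    conv_lhs => rw [show w = (1 + w) + -1 by ring, add_pow, sum_div]
    refine sum_congr rfl fun j hj => ?_
    rw [Nat.cast_choose K (Nat.lt_succ_iff.mp (mem_range.mp hj))]
    field_simp [factorial_ne_zero]
  calc ∑ k ∈ range (s + 1), w ^ k / k !
      = ∑ k ∈ range (s + 1), ∑ j ∈ range (k + 1),
          (1 + w) ^ j / j ! * ((-1) ^ (k - j) / (k - j)!) :=
        sum_congr rfl fun k _ => binomial k
    _ = ∑ j ∈ range (s + 1), ∑ m ∈ range (s + 1 - j), (1 + w) ^ j / j ! * ((-1) ^ m / m !) :=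
        sum_range_diag_flip (s + 1) fun j m => (1 + w) ^ j / j ! * ((-1) ^ m / m !)
    _ = ∑ j ∈ range (s + 1), shuOsherCoeff K s j * (1 + w) ^ j := by
      simp_rw [shuOsherCoeff, sum_div, sum_mul]
      exact sum_congr rfl fun j _ => sum_congr rfl fun m _ => by ring

theorem sum_shuOsherCoeff (K : Type*) [Field K] [CharZero K] (s : ℕ) :
    ∑ j ∈ range (s + 1), shuOsherCoeff K s j = 1 := by
  simpa [sum_range_succ'] using (sum_pow_div_factorial_eq_sum_shuOsherCoeff_mul s (0 : K)).symm

theorem sum_range_neg_one_pow_div_factorial_nonneg {K : Type*} [Field K] [LinearOrder K]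
    [IsStrictOrderedRing K] (n : ℕ) :
    0 ≤ ∑ m ∈ range n, (-1 : K) ^ m / m ! := by
  have even (k : ℕ) : 0 ≤ ∑ m ∈ range (2 * k), (-1 : K) ^ m / m ! := by
    induction k with
    | zero => simp
    | succ k ih =>
      have : (1 : K) / (2 * k + 1)! ≤ 1 / (2 * k)! :=
        one_div_le_one_div_of_le (by positivity) (by exact_mod_cast factorial_le (by omega))
      rw [mul_add_one, sum_range_succ, sum_range_succ, (even_two_mul k).neg_one_pow,
        (odd_two_mul_add_one k).neg_one_pow]
      linarith [neg_div (((2 * k + 1)! : ℕ) : K) 1]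
  obtain ⟨k, rfl | rfl⟩ := Nat.even_or_odd' n
  · exact even k
  · rw [sum_range_succ, (even_two_mul k).neg_one_pow]
    have := even k
    positivity

theorem shuOsherCoeff_nonneg {K : Type*} [Field K] [LinearOrder K] [IsStrictOrderedRing K]
    (s j : ℕ) : 0 ≤ shuOsherCoeff K s j :=
  div_nonneg (sum_range_neg_one_pow_div_factorial_nonneg _) (by positivity)

theorem ofReal_shuOsherCoeff (s j : ℕ) : (shuOsherCoeff ℝ s j : ℂ) = shuOsherCoeff ℂ s j := by
  simp [shuOsherCoeff]

theorem norm_sum_mul_pow_le {R : Type*} [SeminormedRing R] [NormOneClass R] (t : Finset ℕ)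
    (c : ℕ → R) {u : R} (hu : ‖u‖ ≤ 1) : ‖∑ j ∈ t, c j * u ^ j‖ ≤ ∑ j ∈ t, ‖c j‖ := by
  refine (norm_sum_le _ _).trans (sum_le_sum fun j _ => ?_)
  calc ‖c j * u ^ j‖ ≤ ‖c j‖ * ‖u‖ ^ j := (norm_mul_le _ _).trans (by gcongr; exact norm_pow_le u j)
    _ ≤ ‖c j‖ := mul_le_of_le_one_right (norm_nonneg _) (pow_le_one₀ (norm_nonneg _) hu)

theorem norm_one_add_div_one_sub_mul_le_one {α : ℝ} (hα : 1 / 2 ≤ α) {z : ℂ} (hz : z.re ≤ 0) :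
    ‖1 + z / (1 - α * z)‖ ≤ 1 := by
  by_cases hd : 1 - (α : ℂ) * z = 0
  · simp [hd]
  rw [show 1 + z / (1 - α * z) = (1 + (1 - α) * z) / (1 - α * z) by
      rw [eq_div_iff hd, add_mul, div_mul_cancel₀ _ hd]; ring,
    norm_div, div_le_one (norm_pos_iff.mpr hd), ← sq_le_sq₀ (norm_nonneg _) (norm_nonneg _),
    Complex.sq_norm, Complex.sq_norm]
  simp only [Complex.normSq_apply, Complex.add_re, Complex.add_im, Complex.sub_re, Complex.sub_im,
    Complex.mul_re, Complex.mul_im, Complex.one_re, Complex.one_im, Complex.ofReal_re,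
    Complex.ofReal_im]
  nlinarith [mul_nonneg (by linarith : (0 : ℝ) ≤ 2 * α - 1)
    (add_nonneg (sq_nonneg z.re) (sq_nonneg z.im))]

theorem ssp_rk_tase1_stable_general (α : ℝ) (hα : 1 / 2 ≤ α)
    (s : ℕ)
    (z : ℂ) (hz : z.re ≤ 0) :
    ‖∑ k ∈ Finset.range (s + 1),
      (z / (1 - (α : ℂ) * z)) ^ k / (Nat.factorial k : ℂ)‖ ≤ 1 := by
  rw [sum_pow_div_factorial_eq_sum_shuOsherCoeff_mul]
  calc _ ≤ ∑ j ∈ range (s + 1), ‖shuOsherCoeff ℂ s j‖ :=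
        norm_sum_mul_pow_le _ _ (norm_one_add_div_one_sub_mul_le_one hα hz)
    _ = ∑ j ∈ range (s + 1), shuOsherCoeff ℝ s j := by
        refine sum_congr rfl fun j _ => ?_
        rw [← ofReal_shuOsherCoeff, Complex.norm_of_nonneg (shuOsherCoeff_nonneg s j)]
    _ = 1 := sum_shuOsherCoeff ℝ s

/-- Stability of linear SSP Runge–Kutta methods (orders 1 to 4) preconditioned by the
first-order TASE operator with `α ≥ 1/2`: the stability polynomial
`Σ_{k=0}^{s} w^k / k!` with `w = z/(1 - αz)` has modulus at most one on the closed
left half-plane. -/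
theorem ssp_rk_tase1_stable (α : ℝ) (hα : 1 / 2 ≤ α)
    (s : ℕ) (hs1 : 1 ≤ s) (hs4 : s ≤ 4)
    (z : ℂ) (hz : z.re ≤ 0) :
    ‖∑ k ∈ Finset.range (s + 1),
      (z / (1 - (α : ℂ) * z)) ^ k / (Nat.factorial k : ℂ)‖ ≤ 1 :=
  ssp_rk_tase1_stable_general α hα s z hz
end

section
/- (Analyticity of the TASE function on the closed left half-plane.) For every integer p ≥ 1 and every real α > 0, the scalar TASE function z ↦ T p α z is complex-differentiable on the set {z ∈ ℂ : Re z ≤ 0} (all its poles 2^k/α' with α' ∈ {α, α/2, α/4, ...} lie on the positive real axis). -/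
lemma tase_aux (p : ℕ) : ∀ α : ℝ, 0 < α →
    DifferentiableOn ℂ (fun z : ℂ => T (p + 1) α z) {z : ℂ | z.re ≤ 0} := by
  induction p with
  | zero =>
    intro α hα
    simp only [T]
    apply DifferentiableOn.inv
    · exact (differentiable_const _ |>.sub ((differentiable_const _).mul differentiable_id)).differentiableOn
    · intro z hz h
      have hz' : (α : ℂ) * z = 1 := by linear_combination -h
      have hαz : z = (α : ℂ)⁻¹ := (inv_eq_of_mul_eq_one_right hz').symm
      have : z.re = α⁻¹ := by rw [hαz, ← Complex.ofReal_inv, Complex.ofReal_re]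
      have : (0:ℝ) < z.re := this ▸ inv_pos.mpr hα
      exact absurd hz (by simp; linarith)
  | succ n ih =>
    intro α hα
    simp only [T]
    apply DifferentiableOn.div
    · exact ((differentiableOn_const _).mul (ih (α/2) (by linarith))).sub (ih α hα)
    · exact differentiableOn_const _
    · intro z _
      have : (1:ℝ) < 2 ^ (n+1) := one_lt_pow₀ (by norm_num) (Nat.succ_ne_zero n)
      intro h
      have h2 : ((2:ℂ)) ^ (n+1) = 1 := by linear_combination h
      have : ((2:ℝ)) ^ (n+1) = 1 := by
        have h3 : (((2:ℝ)^(n+1) : ℝ) : ℂ) = 1 := by push_cast; exact h2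
        exact_mod_cast h3
      linarith

/-- Analyticity of the TASE function on the closed left half-plane: for `α > 0`, all
poles of `T p α` lie on the positive real axis, so `T p α` is complex-differentiable
on `{z : Re z ≤ 0}`. -/
theorem tase_differentiableOn_left_halfplane (p : ℕ) (hp : 1 ≤ p) (α : ℝ) (hα : 0 < α) :
    DifferentiableOn ℂ (fun z : ℂ => T p α z) {z : ℂ | z.re ≤ 0} := by
  obtain ⟨q, rfl⟩ := Nat.exists_eq_add_of_le hp
  simpa [Nat.add_comm] using tase_aux q α hα
end

section
/- (Negative real-axis bound for the second-order TASE modified eigenvalue.) For every real α > 0 and every real x ≤ 0, the quantity w(x) = x * (-(1 - α*x)⁻¹ + 4*(2 - α*x)⁻¹) satisfies -3/α < w(x) ≤ 0. Consequently, if C > 0 and α ≥ 3/C, then -C ≤ w(x) ≤ 0, so the modified dimensionless eigenvalue lies within the real stability interval [-C, 0] of the explicit scheme for every time step. -/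
/-!
The operator depends on `x` only through `z = αx`, and `α w = z T(z)` with
`z T(z) = z (2 - 3z) / ((1 - z)(2 - z))` and `z T(z) + 3 = (6 - 7z) / ((1 - z)(2 - z))`.
For `z ≤ 0` all factors except `z` are positive, so `-3 < α w ≤ 0`.
-/

/-- The second-order TASE operator `T²(α, x)` as a function of `z = αx`. -/
noncomputable def tase2 (z : ℝ) : ℝ := -(1 - z)⁻¹ + 4 * (2 - z)⁻¹

section

variable {z : ℝ}

theorem mul_tase2_eq (h₁ : 1 - z ≠ 0) (h₂ : 2 - z ≠ 0) :
    z * tase2 z = z * (2 - 3 * z) / ((1 - z) * (2 - z)) := by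
  unfold tase2
  field_simp
  ring

theorem mul_tase2_add_three_eq (h₁ : 1 - z ≠ 0) (h₂ : 2 - z ≠ 0) :
    z * tase2 z + 3 = (6 - 7 * z) / ((1 - z) * (2 - z)) := by
  rw [mul_tase2_eq h₁ h₂]
  field_simp
  ring

theorem mul_tase2_nonpos (hz : z ≤ 0) : z * tase2 z ≤ 0 := by
  rw [mul_tase2_eq (by linarith) (by linarith)]
  exact div_nonpos_of_nonpos_of_nonneg
    (mul_nonpos_of_nonpos_of_nonneg hz (by linarith))
    (mul_nonneg (by linarith) (by linarith))

theorem neg_three_lt_mul_tase2 (hz : z ≤ 0) : -3 < z * tase2 z := by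
  have hpos : 0 < z * tase2 z + 3 := by
    rw [mul_tase2_add_three_eq (by linarith) (by linarith)]
    exact div_pos (by linarith) (mul_pos (by linarith) (by linarith))
  linarith

end

/-- Negative real-axis bound for the second-order TASE modified eigenvalue:
for `α > 0` and `x ≤ 0`, `w(x) = x(-(1-αx)⁻¹ + 4(2-αx)⁻¹)` satisfies
`-3/α < w(x) ≤ 0`; hence if `C > 0` and `α ≥ 3/C`, then `w(x) ∈ [-C, 0]`. -/
theorem tase2_real_axis_bound (α : ℝ) (hα : 0 < α) (x : ℝ) (hx : x ≤ 0) :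
    (-3 / α < x * (-(1 - α * x)⁻¹ + 4 * (2 - α * x)⁻¹) ∧
        x * (-(1 - α * x)⁻¹ + 4 * (2 - α * x)⁻¹) ≤ 0) ∧
      ∀ C : ℝ, 0 < C → 3 / C ≤ α →
        -C ≤ x * (-(1 - α * x)⁻¹ + 4 * (2 - α * x)⁻¹) ∧
          x * (-(1 - α * x)⁻¹ + 4 * (2 - α * x)⁻¹) ≤ 0 := by
  change (-3 / α < x * tase2 (α * x) ∧ x * tase2 (α * x) ≤ 0) ∧
    ∀ C : ℝ, 0 < C → 3 / C ≤ α → -C ≤ x * tase2 (α * x) ∧ x * tase2 (α * x) ≤ 0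
  have hz : α * x ≤ 0 := mul_nonpos_of_nonneg_of_nonpos hα.le hx
  have hw : x * tase2 (α * x) = α * x * tase2 (α * x) / α := by field_simp
  have hlower : -3 / α < x * tase2 (α * x) := by
    rw [hw]
    exact div_lt_div_of_pos_right (neg_three_lt_mul_tase2 hz) hα
  have hupper : x * tase2 (α * x) ≤ 0 := by
    rw [hw]
    exact div_nonpos_of_nonpos_of_nonneg (mul_tase2_nonpos hz) hα.le
  refine ⟨⟨hlower, hupper⟩, fun C hC hCα => ⟨?_, hupper⟩⟩
  have h3α : 3 / α ≤ C := (div_le_comm₀ hC hα).mp hCα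
  rw [neg_div] at hlower
  linarith
end

section
/- (Richardson extrapolation step raises the TASE order.) Let p ≥ 2 be an integer, α a real number, e ∈ ℂ, and f : ℝ → ℂ → ℂ a function such that for each α' ∈ {α, α/2}, the map z ↦ f α' z - 1 - e * (α')^(p-1) * z^(p-1) is big-O of z^p as z → 0 in ℂ. Then the extrapolated function g(z) = (2^(p-1) * f (α/2) z - f α z) / (2^(p-1) - 1) satisfies: z ↦ g z - 1 is big-O of z^p as z → 0. -/
theorem Asymptotics.IsBigO.richardson_sub_one {ι 𝕜 E : Type*} [NormedField 𝕜] [Norm E]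
    {l : Filter ι} {F G h : ι → 𝕜} {g : ι → E} {a b w : 𝕜} (hw : w ≠ 1)
    (hF : (fun x => F x - 1 - a * h x) =O[l] g) (hG : (fun x => G x - 1 - b * h x) =O[l] g)
    (hab : w * b = a) :
    (fun x => (w * G x - F x) / (w - 1) - 1) =O[l] g := by
  have hw' : w - 1 ≠ 0 := sub_ne_zero.mpr hw
  refine (((hG.const_mul_left w).sub hF).const_mul_left (w - 1)⁻¹).congr_left fun x => ?_
  -- the combination is `(w - 1)⁻¹ * (w * (G - 1 - b h) - (F - 1 - a h))`, as `w * b = a`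
  rw [← hab]
  field_simp
  ring

/-- Richardson extrapolation step raises the TASE order: if `f α' z - 1` has leading
error term `e (α')^(p-1) z^(p-1)` up to `O(z^p)` for `α' ∈ {α, α/2}`, then the
extrapolated function `(2^(p-1) f(α/2) - f(α))/(2^(p-1) - 1)` is `1 + O(z^p)`. -/
theorem richardson_step_raises_order (p : ℕ) (hp : 2 ≤ p) (α : ℝ) (e : ℂ)
    (f : ℝ → ℂ → ℂ)
    (hf : ∀ α' ∈ ({α, α / 2} : Set ℝ),
      (fun z : ℂ => f α' z - 1 - e * ((α' : ℂ)) ^ (p - 1) * z ^ (p - 1))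
        =O[nhds 0] fun z : ℂ => z ^ p) :
    (fun z : ℂ => (2 ^ (p - 1) * f (α / 2) z - f α z) / (2 ^ (p - 1) - 1) - 1)
      =O[nhds 0] fun z : ℂ => z ^ p := by
  have hw : (2 : ℂ) ^ (p - 1) ≠ 1 := by
    exact_mod_cast (Nat.one_lt_two_pow (by omega : p - 1 ≠ 0)).ne'
  refine (hf α (by simp)).richardson_sub_one hw (hf (α / 2) (by simp)) ?_
  -- `2 ^ (p - 1) * (α / 2) ^ (p - 1) = α ^ (p - 1)`
  rw [mul_left_comm, Complex.ofReal_div, Complex.ofReal_ofNat, ← mul_pow,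
    mul_div_cancel₀ _ two_ne_zero]
end
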